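/- Every anisotropic metric group (G,q) whose order is a power of 2 satisfies |G| ≤ 8. -/

import Mathlib

/-- The bicharacter associated with a `kˣ`-valued function `q` on `G`:
`b(g,h) = q(g+h) · q(g)⁻¹ · q(h)⁻¹`. -/
def bchar {k : Type*} [Field k] {G : Type*} [AddCommGroup G] (q : G → kˣ) (g h : G) : kˣ :=
  q (g + h) * (q g)⁻¹ * (q h)⁻¹

/-- `q : G → kˣ` is a quadratic form: `q (-g) = q g` for all `g`, and the associated
function `bchar q` is bimultiplicative. -/
structure IsQuadForm {k : Type*} [Field k] {G : Type*} [AddCommGroup G] (q : G → kˣ) : Prop where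
  map_neg : ∀ g : G, q (-g) = q g
  bchar_add_left : ∀ g₁ g₂ h : G, bchar q (g₁ + g₂) h = bchar q g₁ h * bchar q g₂ h
  bchar_add_right : ∀ g h₁ h₂ : G, bchar q g (h₁ + h₂) = bchar q g h₁ * bchar q g h₂

/-- The Gauss sum `τ⁺(G,q) = ∑_{g ∈ G} q(g)`, as an element of `k`. -/
noncomputable def tauPlus {k : Type*} [Field k] {G : Type*} [AddCommGroup G] (q : G → kˣ) : k :=
  ∑ᶠ g : G, (q g : k)

/-- The Gauss sum `τ⁻(G,q) = ∑_{g ∈ G} q(g)⁻¹`, as an element of `k`. -/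
noncomputable def tauMinus {k : Type*} [Field k] {G : Type*} [AddCommGroup G] (q : G → kˣ) : k :=
  ∑ᶠ g : G, (((q g)⁻¹ : kˣ) : k)

/-- Non-degeneracy of (the bicharacter associated with) `q` : the map
`g ↦ b(g, ·)` from `G` to `Hom(G, kˣ)` is injective. -/
def Nondeg {k : Type*} [Field k] {G : Type*} [AddCommGroup G] (q : G → kˣ) : Prop :=
  Function.Injective fun g : G => fun h : G => bchar q g h

/-- Isomorphism of pre-metric groups: a group isomorphism `φ : G₁ ≃ G₂`
with `q₂ ∘ φ = q₁`. -/
def PMIso {k : Type*} [Field k] {G₁ : Type*} [AddCommGroup G₁] {G₂ : Type*} [AddCommGroup G₂]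
    (q₁ : G₁ → kˣ) (q₂ : G₂ → kˣ) : Prop :=
  ∃ φ : G₁ ≃+ G₂, ∀ g : G₁, q₂ (φ g) = q₁ g

/-!
Write `b = bchar q`. Since `q (n • g) = q g ^ n ^ 2` and `b g g = q g ^ 2`, an element killed by `N`
has `q g ^ (2N) = 1`; for `N = 8` this gives `q (4 • g) = q g ^ 16 = 1`, so anisotropy bounds the
exponent of the 2-group `G` by 4.

Let `W` (`signSubgroup`) be the subgroup of 2-torsion elements `g` with `q g = ±1`. Anisotropy
forces `q = -1` on `W \ {0}`, hence `b = -1` on pairs of distinct nonzero elements of `W`. So for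
`z ≠ 0` in `W` the character `b z` of `W` has kernel `{0, z}`, and `|W| ≤ 4`. On the 2-torsion
`G[2]` the map `g ↦ q g ^ 2` is a `±1`-valued character with kernel `W`, so `|G[2]| ≤ 2 |W|`.
Finally `2G ≤ W`:
if `2G = 0` then `|G| = |G[2]| ≤ 8`; otherwise `w = 2 • g₀ ≠ 0` is orthogonal to all of `W`,
which forces `W = {0, w}` and `|G| = |2G| |G[2]| ≤ 2 · 4`.
-/

theorem Units.sq_eq_one_iff {R : Type*} [Ring R] [NoZeroDivisors R] {u : Rˣ} :
    u ^ 2 = 1 ↔ u = 1 ∨ u = -1 := by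
  simp only [Units.ext_iff, Units.val_pow_eq_pow_val, Units.val_one, Units.val_neg,
    _root_.sq_eq_one_iff]

theorem four_nsmul_eq_zero_of_two_pow_nsmul_eq_zero {A : Type*} [AddMonoid A]
    (h : ∀ a : A, 8 • a = 0 → 4 • a = 0) (r : ℕ) {a : A} (ha : 2 ^ r • a = 0) : 4 • a = 0 := by
  induction r generalizing a with
  | zero => rw [pow_zero, one_smul] at ha; rw [ha, smul_zero]
  | succ r ih =>
    have h2a : 4 • (2 • a) = 0 := ih (by rwa [smul_smul, ← pow_succ])
    exact h a (by rwa [smul_smul] at h2a)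

namespace AddSubgroup

variable {A : Type*} [AddCommGroup A]

theorem card_le_two_mul_card_of_sub_mem {H : AddSubgroup A}
    (hH : ∀ a b, a ∉ H → b ∉ H → a - b ∈ H) : Nat.card A ≤ 2 * Nat.card H := by
  classical
  have hinj : Function.Injective fun x : A ⧸ H => decide (x = 0) := by
    intro x y hxy
    induction x using QuotientAddGroup.induction_on with | H a =>
    induction y using QuotientAddGroup.induction_on with | H b =>
    by_cases ha : (a : A ⧸ H) = 0 <;> by_cases hb : (b : A ⧸ H) = 0
    · rw [ha, hb]
    · simp [ha, hb] at hxy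
    · simp [ha, hb] at hxy
    · rw [QuotientAddGroup.eq_zero_iff] at ha hb
      exact QuotientAddGroup.eq_iff_sub_mem.mpr (hH a b ha hb)
  have hindex : H.index ≤ 2 := by
    simpa [index_eq_card] using Nat.card_le_card_of_injective _ hinj
  calc Nat.card A = Nat.card H * H.index := H.card_mul_index.symm
    _ ≤ Nat.card H * 2 := Nat.mul_le_mul_left _ hindex
    _ = 2 * Nat.card H := Nat.mul_comm _ _

theorem card_le_two_mul_card_of_le_of_sub_mem {H K : AddSubgroup A} (hHK : H ≤ K)
    (h : ∀ a ∈ K, ∀ b ∈ K, a ∉ H → b ∉ H → a - b ∈ H) : Nat.card K ≤ 2 * Nat.card H := by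
  rw [← Nat.card_congr (addSubgroupOfEquivOfLe hHK).toEquiv]
  refine card_le_two_mul_card_of_sub_mem fun a b ha hb => ?_
  rw [mem_addSubgroupOf] at ha hb ⊢
  exact h a a.2 b b.2 ha hb

theorem card_zmultiples_le_two {z : A} (hz : 2 • z = 0) : Nat.card (zmultiples z) ≤ 2 :=
  Nat.card_zmultiples z ▸ addOrderOf_le_of_nsmul_eq_zero two_pos hz

end AddSubgroup

theorem neg_eq_self_of_two_nsmul_eq_zero {A : Type*} [AddGroup A] {a : A} (ha : 2 • a = 0) :
    -a = a :=
  neg_eq_of_add_eq_zero_left (by rwa [← two_nsmul])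

section

variable {k : Type*} [Field k] {G : Type*} [AddCommGroup G]

theorem bchar_mul_mul (q : G → kˣ) (g h : G) : bchar q g h * q g * q h = q (g + h) := by
  simp [bchar, mul_assoc]

theorem bchar_comm (q : G → kˣ) (g h : G) : bchar q g h = bchar q h g := by
  simp only [bchar, add_comm g, mul_right_comm (q (h + g))]

end

namespace IsQuadForm

variable {k : Type*} [Field k] {G : Type*} [AddCommGroup G] {q : G → kˣ}

theorem bchar_zero_left (hq : IsQuadForm q) (h : G) : bchar q 0 h = 1 := by
  have h00 := hq.bchar_add_left 0 0 h
  rw [add_zero] at h00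
  exact left_eq_mul.mp h00

theorem map_zero (hq : IsQuadForm q) : q 0 = 1 := by
  simpa [bchar] using hq.bchar_zero_left 0

theorem bchar_self (hq : IsQuadForm q) (g : G) : bchar q g g = q g ^ 2 := by
  have h := hq.bchar_add_left g (-g) g
  have hneg : bchar q (-g) g = (q g ^ 2)⁻¹ := by
    simp [bchar, hq.map_zero, hq.map_neg, sq]
  rw [add_neg_cancel, hq.bchar_zero_left, hneg] at h
  exact mul_inv_eq_one.mp h.symm

theorem bchar_nsmul_left (hq : IsQuadForm q) (n : ℕ) (g h : G) :
    bchar q (n • g) h = bchar q g h ^ n := by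
  induction n with
  | zero => rw [zero_smul, pow_zero, hq.bchar_zero_left]
  | succ n ih => rw [succ_nsmul, hq.bchar_add_left, ih, pow_succ]

theorem bchar_nsmul_right (hq : IsQuadForm q) (n : ℕ) (g h : G) :
    bchar q g (n • h) = bchar q g h ^ n := by
  rw [bchar_comm, hq.bchar_nsmul_left, bchar_comm]

theorem map_nsmul (hq : IsQuadForm q) (n : ℕ) (g : G) : q (n • g) = q g ^ n ^ 2 := by
  induction n with
  | zero => rw [zero_smul, hq.map_zero, zero_pow two_ne_zero, pow_zero]
  | succ n ih =>
    rw [succ_nsmul, ← bchar_mul_mul q, ih, hq.bchar_nsmul_left, hq.bchar_self, ← pow_mul,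
      ← pow_add, ← pow_succ]
    ring_nf

theorem pow_two_mul_eq_one (hq : IsQuadForm q) {N : ℕ} {g : G} (hN : N • g = 0) :
    q g ^ (2 * N) = 1 := by
  rw [pow_mul, ← hq.bchar_self, ← hq.bchar_nsmul_left, hN, hq.bchar_zero_left]

theorem sq_bchar_eq_one (hq : IsQuadForm q) {g : G} (hg : 2 • g = 0) (h : G) :
    bchar q g h ^ 2 = 1 := by
  rw [← hq.bchar_nsmul_left, hg, hq.bchar_zero_left]

theorem four_nsmul_eq_zero_of_eight_nsmul_eq_zero (hq : IsQuadForm q)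
    (han : ∀ g : G, g ≠ 0 → q g ≠ 1) {g : G} (hg : 8 • g = 0) : 4 • g = 0 := by
  by_contra h4
  refine han _ h4 ?_
  rw [hq.map_nsmul]
  exact hq.pow_two_mul_eq_one hg

def signSubgroup (hq : IsQuadForm q) : AddSubgroup G where
  carrier := {g | 2 • g = 0 ∧ q g ^ 2 = 1}
  zero_mem' := ⟨smul_zero 2, by rw [hq.map_zero, one_pow]⟩
  add_mem' := by
    rintro a b ⟨ha, hqa⟩ ⟨hb, hqb⟩
    refine ⟨by rw [smul_add, ha, hb, add_zero], ?_⟩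
    rw [← bchar_mul_mul q, mul_pow, mul_pow, hqa, hqb, hq.sq_bchar_eq_one ha, one_mul, one_mul]
  neg_mem' := by
    rintro a ⟨ha, hqa⟩
    exact ⟨by rw [smul_neg, ha, neg_zero], by rw [hq.map_neg, hqa]⟩

theorem two_nsmul_mem_signSubgroup (hq : IsQuadForm q) {g : G} (hg : 4 • g = 0) :
    2 • g ∈ hq.signSubgroup :=
  ⟨by rwa [smul_smul], by rw [hq.map_nsmul, ← pow_mul]; exact hq.pow_two_mul_eq_one hg⟩

theorem card_ker_le_two_mul_card_signSubgroup (hq : IsQuadForm q) :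
    Nat.card (nsmulAddMonoidHom (α := G) 2).ker ≤ 2 * Nat.card hq.signSubgroup := by
  have hsq : ∀ a : G, 2 • a = 0 → a ∉ hq.signSubgroup → q a ^ 2 = -1 := fun a ha haW =>
    (Units.sq_eq_one_iff.mp (by rw [← pow_mul]; exact hq.pow_two_mul_eq_one ha)).resolve_left
      fun h => haW ⟨ha, h⟩
  refine AddSubgroup.card_le_two_mul_card_of_le_of_sub_mem (fun g hg => hg.1) ?_
  intro a (ha : 2 • a = 0) b (hb : 2 • b = 0) haW hbW
  refine ⟨by rw [smul_sub, ha, hb, sub_zero], ?_⟩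
  rw [sub_eq_add_neg, neg_eq_self_of_two_nsmul_eq_zero hb, ← bchar_mul_mul q, mul_pow, mul_pow,
    hq.sq_bchar_eq_one ha, hsq a ha haW, hsq b hb hbW, one_mul, neg_one_mul, neg_neg]

theorem eq_neg_one_of_mem_signSubgroup (hq : IsQuadForm q) (han : ∀ g : G, g ≠ 0 → q g ≠ 1)
    {g : G} (hg : g ∈ hq.signSubgroup) (hg0 : g ≠ 0) : q g = -1 :=
  (Units.sq_eq_one_iff.mp hg.2).resolve_left (han g hg0)

theorem bchar_eq_neg_one_of_mem_signSubgroup (hq : IsQuadForm q)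
    (han : ∀ g : G, g ≠ 0 → q g ≠ 1) {g h : G} (hg : g ∈ hq.signSubgroup)
    (hh : h ∈ hq.signSubgroup) (hg0 : g ≠ 0) (hh0 : h ≠ 0) (hgh : g ≠ h) : bchar q g h = -1 := by
  have hgh0 : g + h ≠ 0 := fun h0 =>
    hgh (by rw [eq_neg_of_add_eq_zero_left h0, neg_eq_self_of_two_nsmul_eq_zero hh.1])
  have hsum := hq.eq_neg_one_of_mem_signSubgroup han (add_mem hg hh) hgh0
  simp [bchar, hsum, hq.eq_neg_one_of_mem_signSubgroup han hg hg0,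
    hq.eq_neg_one_of_mem_signSubgroup han hh hh0]

theorem card_signSubgroup_le_four [CharZero k] (hq : IsQuadForm q)
    (han : ∀ g : G, g ≠ 0 → q g ≠ 1) : Nat.card hq.signSubgroup ≤ 4 := by
  obtain hbot | ⟨z, hz, hz0⟩ := hq.signSubgroup.bot_or_exists_ne_zero
  · rw [hbot, AddSubgroup.card_bot]
    norm_num
  have hzW : AddSubgroup.zmultiples z ≤ hq.signSubgroup := AddSubgroup.zmultiples_le_of_mem hz
  have hsub : ∀ a ∈ hq.signSubgroup, ∀ b ∈ hq.signSubgroup, a ∉ AddSubgroup.zmultiples z →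
      b ∉ AddSubgroup.zmultiples z → a - b ∈ AddSubgroup.zmultiples z := by
    intro a ha b hb haz hbz
    have hzc : ∀ c ∈ hq.signSubgroup, c ∉ AddSubgroup.zmultiples z → bchar q z c = -1 :=
      fun c hc hcz => hq.bchar_eq_neg_one_of_mem_signSubgroup han hz hc hz0
        (fun h => hcz (h ▸ zero_mem _)) (fun h => hcz (h ▸ AddSubgroup.mem_zmultiples z))
    rw [sub_eq_add_neg, neg_eq_self_of_two_nsmul_eq_zero hb.1]
    by_contra habz
    have h := hq.bchar_add_right z a b
    rw [hzc _ (add_mem ha hb) habz, hzc a ha haz, hzc b hb hbz, neg_one_mul, neg_neg] at h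
    exact neg_units_ne_self 1 h
  calc Nat.card hq.signSubgroup ≤ 2 * Nat.card (AddSubgroup.zmultiples z) :=
        AddSubgroup.card_le_two_mul_card_of_le_of_sub_mem hzW hsub
    _ ≤ 2 * 2 := Nat.mul_le_mul_left _ (AddSubgroup.card_zmultiples_le_two hz.1)

theorem card_signSubgroup_le_two [CharZero k] [Finite G] (hq : IsQuadForm q)
    (han : ∀ g : G, g ≠ 0 → q g ≠ 1) {g : G} (hg4 : 4 • g = 0) (hg2 : 2 • g ≠ 0) :
    Nat.card hq.signSubgroup ≤ 2 := by
  have hW : hq.signSubgroup ≤ AddSubgroup.zmultiples (2 • g) := by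
    intro v hv
    by_contra hvw
    have h := hq.bchar_eq_neg_one_of_mem_signSubgroup han hv (hq.two_nsmul_mem_signSubgroup hg4)
      (fun h => hvw (h ▸ zero_mem _)) hg2 (fun h => hvw (h ▸ AddSubgroup.mem_zmultiples _))
    rw [hq.bchar_nsmul_right, hq.sq_bchar_eq_one hv.1] at h
    exact neg_units_ne_self 1 h.symm
  calc Nat.card hq.signSubgroup ≤ Nat.card (AddSubgroup.zmultiples (2 • g)) :=
        AddSubgroup.card_le_of_le hW
    _ ≤ 2 := AddSubgroup.card_zmultiples_le_two (hq.two_nsmul_mem_signSubgroup hg4).1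

end IsQuadForm

theorem anisotropic_metric_two_group_card_le_eight_general
    {k : Type*} [Field k] [CharZero k]
    {G : Type*} [AddCommGroup G] [Finite G]
    (q : G → kˣ) (hq : IsQuadForm q)
    (han : ∀ g : G, g ≠ 0 → q g ≠ 1)
    (hcard : ∃ m : ℕ, Nat.card G = 2 ^ m) :
    Nat.card G ≤ 8 := by
  obtain ⟨m, hm⟩ := hcard
  have hexp (g : G) : 4 • g = 0 :=
    four_nsmul_eq_zero_of_two_pow_nsmul_eq_zero
      (fun _ => hq.four_nsmul_eq_zero_of_eight_nsmul_eq_zero han) m (hm ▸ card_nsmul_eq_zero')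
  set D := nsmulAddMonoidHom (α := G) 2
  have hG : Nat.card G = Nat.card D.ker * Nat.card D.range := by
    rw [← D.ker.card_mul_index, AddSubgroup.index_ker]
  have hrange : Nat.card D.range * Nat.card hq.signSubgroup ≤ 4 := by
    by_cases h2 : ∃ g : G, 2 • g ≠ 0
    · obtain ⟨g, hg⟩ := h2
      have hW := hq.card_signSubgroup_le_two han (hexp g) hg
      have hDW : Nat.card D.range ≤ Nat.card hq.signSubgroup :=
        AddSubgroup.card_le_of_le fun _ ⟨g, hg⟩ => hg ▸ hq.two_nsmul_mem_signSubgroup (hexp g)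
      nlinarith
    · push Not at h2
      have hD : D.range = ⊥ := AddMonoidHom.range_eq_bot_iff.mpr (AddMonoidHom.ext h2)
      rw [hD, AddSubgroup.card_bot, one_mul]
      exact hq.card_signSubgroup_le_four han
  calc Nat.card G = Nat.card D.ker * Nat.card D.range := hG
    _ ≤ 2 * Nat.card hq.signSubgroup * Nat.card D.range := by
      gcongr
      exact hq.card_ker_le_two_mul_card_signSubgroup
    _ ≤ 8 := by nlinarith

/-- Every anisotropic metric group whose order is a power of `2`
has order at most `8`. -/
theorem anisotropic_metric_two_group_card_le_eight
    {k : Type*} [Field k] [IsAlgClosed k] [CharZero k]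
    {G : Type*} [AddCommGroup G] [Finite G]
    (q : G → kˣ) (hq : IsQuadForm q) (hnd : Nondeg q)
    (han : ∀ g : G, g ≠ 0 → q g ≠ 1)
    (hcard : ∃ m : ℕ, Nat.card G = 2 ^ m) :
    Nat.card G ≤ 8 :=
  anisotropic_metric_two_group_card_le_eight_general q hq han hcard
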